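/- Let C₁, …, C_m be nonempty closed convex subsets of the Euclidean space ℝⁿ and consider the cyclic projection iteration x^{k+1} = P_{(k mod m)+1}(x^k). Suppose that for at least one starting point x⁰ ∈ ℝⁿ the subsequence (x^{km+1})_{k≥0} of the generated sequence is bounded. Then for every sequence (x^k)_{k≥0} generated by this iteration (from any starting point) there exist points x^{*,i} ∈ C_i, i = 1, …, m, such that P_{i+1}(x^{*,i}) = x^{*,i+1} for i = 1, …, m−1 and P₁(x^{*,m}) = x^{*,1}, and for each i = 1, …, m: lim_{k→∞} (x^{km+i+1} − x^{km+i}) = x^{*,i+1} − x^{*,i} and lim_{k→∞} x^{km+i} = x^{*,i}. -/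

import Mathlib

/-!
The iteration is the nonautonomous system `x (t + 1) = F t (x t)` whose steps `F t = P (t mod m)`
are `m`-periodic and firmly nonexpansive, so the `m`-step map `Q` is nonexpansive. A bounded
`Q`-orbit forces `Q` to have a fixed point, which spans an `m`-periodic trajectory `w`. For any
trajectory `x`, firm nonexpansiveness makes `‖x t - w t‖ ^ 2` drop by at least
`‖(x - w) (t + 1) - (x - w) t‖ ^ 2` at each step, so the displacement `x - w` settles down and
`u k = x (k * m + 1)` is asymptotically regular. Being Fejér monotone with respect to the fixed
points of `Q`, `u` converges, in finite dimension, to a fixed point `p` of `Q`; the cycle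
`x^{*,i}` is the periodic trajectory through `p`.
-/

open Filter

/-- `P` is the metric (nearest-point) projection onto the set `C`. -/
def IsProjOn {H : Type*} [NormedAddCommGroup H] (P : H → H) (C : Set H) : Prop :=
  ∀ x : H, P x ∈ C ∧ ∀ y ∈ C, ‖x - P x‖ ≤ ‖x - y‖

open Topology Function
open scoped RealInnerProductSpace

-- In an inner product space this is the usual `‖T a - T b‖ ^ 2 ≤ ⟪T a - T b, a - b⟫`.
def FirmlyNonexpansive {E : Type*} [SeminormedAddCommGroup E] (T : E → E) : Prop :=
  ∀ a b, ‖T a - T b‖ ^ 2 + ‖(a - T a) - (b - T b)‖ ^ 2 ≤ ‖a - b‖ ^ 2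

theorem FirmlyNonexpansive.lipschitzWith {E : Type*} [SeminormedAddCommGroup E] {T : E → E}
    (hT : FirmlyNonexpansive T) : LipschitzWith 1 T := by
  refine LipschitzWith.mk_one fun a b => ?_
  rw [dist_eq_norm, dist_eq_norm]
  exact le_of_sq_le_sq (by nlinarith [hT a b, sq_nonneg ‖(a - T a) - (b - T b)‖]) (norm_nonneg _)

section Projection

variable {H : Type*} [NormedAddCommGroup H] [InnerProductSpace ℝ H] {P : H → H} {C : Set H}

theorem IsProjOn.inner_sub_nonpos (hP : IsProjOn P C) (hC : Convex ℝ C) (x : H) {y : H}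
    (hy : y ∈ C) : ⟪x - P x, y - P x⟫ ≤ 0 := by
  have : Nonempty C := ⟨⟨y, hy⟩⟩
  refine (norm_eq_iInf_iff_real_inner_le_zero hC (hP x).1).1 ?_ y hy
  exact le_antisymm (le_ciInf fun w => (hP x).2 w w.2)
    (ciInf_le ⟨0, by rintro _ ⟨w, rfl⟩; positivity⟩ (⟨P x, (hP x).1⟩ : C))

theorem IsProjOn.firmlyNonexpansive (hP : IsProjOn P C) (hC : Convex ℝ C) :
    FirmlyNonexpansive P := by
  intro a b
  have ha := hP.inner_sub_nonpos hC a (hP b).1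
  have hb := hP.inner_sub_nonpos hC b (hP a).1
  have hcross : ⟪P a - P b, (a - P a) - (b - P b)⟫
      = -⟪a - P a, P b - P a⟫ - ⟪b - P b, P a - P b⟫ := by
    simp only [inner_sub_left, inner_sub_right, real_inner_comm]; ring
  calc ‖P a - P b‖ ^ 2 + ‖(a - P a) - (b - P b)‖ ^ 2
      ≤ ‖(P a - P b) + ((a - P a) - (b - P b))‖ ^ 2 := by
        rw [norm_add_sq_real]; linarith
    _ = ‖a - b‖ ^ 2 := by congr 2; abel

end Projection

theorem norm_sq_add_norm_sub_sq_le_of_orbits {E : Type*} [SeminormedAddCommGroup E]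
    {F : ℕ → E → E} (hF : ∀ t, FirmlyNonexpansive (F t)) {x w : ℕ → E}
    (hx : ∀ t, x (t + 1) = F t (x t)) (hw : ∀ t, w (t + 1) = F t (w t)) (t : ℕ) :
    ‖x (t + 1) - w (t + 1)‖ ^ 2 + ‖(x (t + 1) - w (t + 1)) - (x t - w t)‖ ^ 2
      ≤ ‖x t - w t‖ ^ 2 := by
  have hdiff : (x (t + 1) - w (t + 1)) - (x t - w t)
      = -((x t - F t (x t)) - (w t - F t (w t))) := by
    rw [hx, hw]; abel
  rw [hdiff, norm_neg, hx, hw]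
  exact hF t (x t) (w t)

section Evolve

variable {E : Type*} (F : ℕ → E → E)

def evolve (s : ℕ) : ℕ → E → E
  | 0 => id
  | t + 1 => F (s + t) ∘ evolve s t

variable {F}

theorem evolve_succ (s t : ℕ) (z : E) : evolve F s (t + 1) z = F (s + t) (evolve F s t z) := rfl

theorem evolve_add (s a b : ℕ) (z : E) :
    evolve F s (a + b) z = evolve F (s + a) b (evolve F s a z) := by
  induction b with
  | zero => rfl
  | succ b ih => rw [← add_assoc, evolve_succ, ih, evolve_succ, add_assoc]

theorem eq_evolve_of_orbit {x : ℕ → E} (hx : ∀ t, x (t + 1) = F t (x t)) (s t : ℕ) :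
    x (s + t) = evolve F s t (x s) := by
  induction t with
  | zero => rfl
  | succ t ih => rw [← add_assoc, hx, ih, evolve_succ]

theorem evolve_add_period {c : ℕ} (hF : Periodic F c) (s : ℕ) : evolve F (s + c) = evolve F s := by
  funext t z
  induction t with
  | zero => rfl
  | succ t ih => rw [evolve_succ, evolve_succ, ih, add_right_comm, hF]

theorem periodic_evolve {c : ℕ} (hF : Periodic F c) {s : ℕ} {z : E}
    (hz : IsFixedPt (evolve F s c) z) : Periodic (fun t => evolve F s t z) c := fun t => by
  simp only
  rw [add_comm, evolve_add, evolve_add_period hF, hz.eq]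

theorem lipschitzWith_evolve [PseudoEMetricSpace E] (hF : ∀ t, LipschitzWith 1 (F t))
    (s t : ℕ) : LipschitzWith 1 (evolve F s t) := by
  induction t with
  | zero => exact LipschitzWith.id
  | succ t ih => exact (one_mul (1 : NNReal)) ▸ (hF (s + t)).comp ih

end Evolve

section Sequences

variable {E : Type*} [SeminormedAddCommGroup E] {e : ℕ → E}

theorem tendsto_sub_succ_of_norm_sq_add_le
    (h : ∀ t, ‖e (t + 1)‖ ^ 2 + ‖e (t + 1) - e t‖ ^ 2 ≤ ‖e t‖ ^ 2) :
    Tendsto (fun t => e (t + 1) - e t) atTop (𝓝 0) := by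
  have hanti : Antitone fun t => ‖e t‖ ^ 2 :=
    antitone_nat_of_succ_le fun t => by nlinarith [h t, sq_nonneg ‖e (t + 1) - e t‖]
  have hconv := tendsto_atTop_ciInf hanti ⟨0, by rintro _ ⟨t, rfl⟩; positivity⟩
  have hgap : Tendsto (fun t => ‖e t‖ ^ 2 - ‖e (t + 1)‖ ^ 2) atTop (𝓝 0) := by
    simpa using hconv.sub (hconv.comp (tendsto_add_atTop_nat 1))
  have hsq : Tendsto (fun t => ‖e (t + 1) - e t‖ ^ 2) atTop (𝓝 0) :=
    squeeze_zero (fun t => by positivity) (fun t => by linarith [h t]) hgap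
  rw [tendsto_zero_iff_norm_tendsto_zero]
  simpa using hsq.sqrt

theorem tendsto_sub_add_of_tendsto_sub_succ (h : Tendsto (fun t => e (t + 1) - e t) atTop (𝓝 0))
    (N : ℕ) : Tendsto (fun t => e (t + N) - e t) atTop (𝓝 0) := by
  induction N with
  | zero => simpa using tendsto_const_nhds
  | succ N ih =>
    simpa [comp_def, add_assoc] using (h.comp (tendsto_add_atTop_nat N)).add ih

end Sequences

section FixedPoint

variable {E : Type*} [NormedAddCommGroup E] {Q : E → E} {u : ℕ → E}

theorem norm_le_of_eq_smul_of_orbit [NormedSpace ℝ E] (hQ : LipschitzWith 1 Q)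
    (hu : ∀ k, u (k + 1) = Q (u k)) {R : ℝ} (hR : ∀ k, ‖u k‖ ≤ R) {t : ℝ} (ht0 : 0 ≤ t)
    (ht1 : t < 1) {z : E} (hz : z = t • Q z) : ‖z‖ ≤ 2 * R := by
  have hstep : ∀ k, ‖z - u (k + 1)‖ - R ≤ t * (‖z - u k‖ - R) := fun k => by
    have hsplit : z - u (k + 1) = t • (Q z - Q (u k)) - (1 - t) • u (k + 1) := by
      rw [hu, smul_sub, sub_smul, one_smul, ← hz]; abel
    have hlip : ‖Q z - Q (u k)‖ ≤ ‖z - u k‖ := by simpa using hQ.norm_sub_le z (u k)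
    calc ‖z - u (k + 1)‖ - R
        ≤ t * ‖Q z - Q (u k)‖ + (1 - t) * ‖u (k + 1)‖ - R := by
          rw [hsplit]
          grw [norm_sub_le, norm_smul, norm_smul, Real.norm_of_nonneg ht0,
            Real.norm_of_nonneg (by linarith)]
      _ ≤ t * ‖z - u k‖ + (1 - t) * R - R := by
          gcongr
          exact hR _
      _ = t * (‖z - u k‖ - R) := by ring
  have hgeom : ∀ k, ‖z - u k‖ - R ≤ t ^ k * (‖z - u 0‖ - R) := fun k => by
    induction k with
    | zero => simp
    | succ k ih => rw [pow_succ']; grw [hstep, ih]; ring_nf; rfl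
  have hlim : Tendsto (fun k => 2 * R + t ^ k * (‖z - u 0‖ - R)) atTop (𝓝 (2 * R)) := by
    simpa using (tendsto_pow_atTop_nhds_zero_of_lt_one ht0 ht1).mul_const (‖z - u 0‖ - R)
      |>.const_add (2 * R)
  refine ge_of_tendsto' hlim fun k => ?_
  calc ‖z‖ ≤ ‖u k‖ + ‖z - u k‖ := by simpa using norm_add_le (u k) (z - u k)
    _ ≤ _ := by linarith [hR k, hgeom k]

theorem exists_isFixedPt_of_isBounded_orbit [NormedSpace ℝ E] [ProperSpace E]
    (hQ : LipschitzWith 1 Q) (hu : ∀ k, u (k + 1) = Q (u k))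
    (hb : Bornology.IsBounded (Set.range u)) : ∃ c, IsFixedPt Q c := by
  obtain ⟨R, hR⟩ := isBounded_iff_forall_norm_le.mp hb
  replace hR : ∀ k, ‖u k‖ ≤ R := fun k => hR _ ⟨k, rfl⟩
  have hR0 : 0 ≤ R := (norm_nonneg _).trans (hR 0)
  -- fixed points of the contractions `t • Q`, `t < 1`, are almost fixed by `Q` and stay bounded
  have happrox : ∀ j : ℕ, ∃ z ∈ Metric.closedBall (0 : E) (2 * R),
      ‖z - Q z‖ ≤ 1 / (j + 1) * (4 * R) := fun j => by
    set t : ℝ := 1 - 1 / (j + 1)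
    have ht0 : 0 ≤ t := by
      have : 1 / ((j : ℝ) + 1) ≤ 1 := div_le_one_of_le₀ (by simp) (by positivity)
      linarith
    have ht1 : t < 1 := by simp only [t]; linarith [show 0 < 1 / ((j : ℝ) + 1) by positivity]
    have hcontr : ContractingWith ‖t‖₊ (fun x => t • Q x) :=
      ⟨by rw [← NNReal.coe_lt_coe, coe_nnnorm, Real.norm_of_nonneg ht0]; exact ht1,
        (mul_one ‖t‖₊) ▸ (lipschitzWith_smul t).comp hQ⟩
    set z := ContractingWith.fixedPoint _ hcontr
    have hz : z = t • Q z := (ContractingWith.fixedPoint_isFixedPt hcontr).symm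
    have hzR : ‖z‖ ≤ 2 * R := norm_le_of_eq_smul_of_orbit hQ hu hR ht0 ht1 hz
    refine ⟨z, by simpa using hzR, ?_⟩
    have hQz : ‖Q z‖ ≤ 4 * R := calc
      ‖Q z‖ ≤ ‖Q z - Q (u 0)‖ + ‖Q (u 0)‖ := norm_le_norm_sub_add _ _
      _ ≤ ‖z - u 0‖ + R := add_le_add (by simpa using hQ.norm_sub_le z (u 0)) (hu 0 ▸ hR 1)
      _ ≤ ‖z‖ + ‖u 0‖ + R := by grw [norm_sub_le]
      _ ≤ 4 * R := by linarith [hR 0]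
    calc ‖z - Q z‖ = ‖(1 - t) • Q z‖ := by rw [norm_sub_rev, sub_smul, one_smul, ← hz]
      _ ≤ 1 / (j + 1) * (4 * R) := by
          rw [norm_smul, Real.norm_of_nonneg (by linarith)]
          simp only [t, sub_sub_cancel]
          gcongr
  obtain ⟨c, -, hc⟩ := (isCompact_closedBall (0 : E) (2 * R)).exists_isMinOn
    ⟨0, by simpa using hR0⟩ (continuous_id.sub hQ.continuous).norm.continuousOn
  have hlim := (tendsto_one_div_add_atTop_nhds_zero_nat (𝕜 := ℝ)).mul_const (4 * R)
  rw [zero_mul] at hlim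
  have hc0 : ‖c - Q c‖ ≤ 0 := ge_of_tendsto' hlim fun j => by
    obtain ⟨z, hz, hzQ⟩ := happrox j
    exact (hc hz).trans hzQ
  exact ⟨c, (sub_eq_zero.mp (norm_le_zero_iff.mp hc0)).symm⟩

theorem exists_tendsto_isFixedPt_of_tendsto_sub [ProperSpace E] (hQ : LipschitzWith 1 Q)
    {z : E} (hz : IsFixedPt Q z) (hu : ∀ k, u (k + 1) = Q (u k))
    (hreg : Tendsto (fun k => u (k + 1) - u k) atTop (𝓝 0)) :
    ∃ p, IsFixedPt Q p ∧ Tendsto u atTop (𝓝 p) := by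
  have hfejer : ∀ p, IsFixedPt Q p → Antitone fun k => ‖u k - p‖ := fun p hp =>
    antitone_nat_of_succ_le fun k => by
      simpa [hu, hp.eq] using hQ.norm_sub_le (u k) p
  have hbdd : ∀ k, u k ∈ Metric.closedBall z ‖u 0 - z‖ := fun k => by
    simpa [dist_eq_norm] using hfejer z hz (Nat.zero_le k)
  obtain ⟨p, -, φ, hφ, hφp⟩ := tendsto_subseq_of_bounded Metric.isBounded_closedBall hbdd
  have hp : IsFixedPt Q p := by
    have hnext : Tendsto (fun j => u (φ j + 1)) atTop (𝓝 p) := by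
      simpa using hφp.add (hreg.comp hφ.tendsto_atTop)
    refine tendsto_nhds_unique ?_ hnext
    simpa [hu, comp_def] using (hQ.continuous.tendsto p).comp hφp
  refine ⟨p, hp, tendsto_iff_norm_sub_tendsto_zero.mpr ?_⟩
  have hconv := tendsto_atTop_ciInf (hfejer p hp) ⟨0, by rintro _ ⟨k, rfl⟩; positivity⟩
  have hsub : Tendsto (fun j => ‖u (φ j) - p‖) atTop (𝓝 0) := by
    simpa using (hφp.sub_const p).norm
  rwa [tendsto_nhds_unique (hconv.comp hφ.tendsto_atTop) hsub] at hconv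

end FixedPoint

theorem exists_isFixedPt_evolve_tendsto {E : Type*} [NormedAddCommGroup E] [NormedSpace ℝ E]
    [ProperSpace E] {F : ℕ → E → E} {m : ℕ} (hm : 0 < m) (hF : ∀ t, FirmlyNonexpansive (F t))
    (hper : Periodic F m) {s : ℕ} {y : ℕ → E} (hy : ∀ t, y (t + 1) = F t (y t))
    (hyb : Bornology.IsBounded (Set.range fun k => y (k * m + s))) {x : ℕ → E}
    (hx : ∀ t, x (t + 1) = F t (x t)) :
    ∃ p, IsFixedPt (evolve F s m) p ∧
      ∀ t, Tendsto (fun k => x (k * m + s + t)) atTop (𝓝 (evolve F s t p)) := by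
  have hlip : ∀ t, LipschitzWith 1 (evolve F s t) :=
    lipschitzWith_evolve (fun t => (hF t).lipschitzWith) s
  have hcycle : ∀ {v : ℕ → E}, (∀ t, v (t + 1) = F t (v t)) →
      ∀ k t, v (k * m + s + t) = evolve F s t (v (k * m + s)) := fun hv k t => by
    rw [eq_evolve_of_orbit hv, add_comm (k * m), evolve_add_period (by simpa using hper.nat_mul k)]
  have hcycle_succ : ∀ {v : ℕ → E}, (∀ t, v (t + 1) = F t (v t)) →
      ∀ k, v ((k + 1) * m + s) = evolve F s m (v (k * m + s)) := fun hv k => by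
    rw [← hcycle hv, add_mul, one_mul, add_right_comm]
  obtain ⟨z, hz⟩ := exists_isFixedPt_of_isBounded_orbit (hlip m) (hcycle_succ hy) hyb
  set w : ℕ → E := fun t => evolve F s t z
  set e : ℕ → E := fun t => x (s + t) - w t
  have he : ∀ t, ‖e (t + 1)‖ ^ 2 + ‖e (t + 1) - e t‖ ^ 2 ≤ ‖e t‖ ^ 2 :=
    norm_sq_add_norm_sub_sq_le_of_orbits (x := fun t => x (s + t)) (w := w)
      (fun t => hF (s + t)) (fun t => by rw [← add_assoc, hx]) (fun t => evolve_succ s t z)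
  have hreg : Tendsto (fun k => x ((k + 1) * m + s) - x (k * m + s)) atTop (𝓝 0) := by
    have hkm : Tendsto (fun k => k * m) atTop atTop := tendsto_id.atTop_mul_const' hm
    refine ((tendsto_sub_add_of_tendsto_sub_succ (tendsto_sub_succ_of_norm_sq_add_le he) m).comp
      hkm).congr fun k => ?_
    -- `w` is `m`-periodic, so only the `x`-part of `e (k * m + m) - e (k * m)` survives
    simp only [comp_apply, e, w, periodic_evolve hper hz (k * m)]
    rw [sub_sub_sub_cancel_right, add_mul, one_mul, add_comm s, add_comm s]
  obtain ⟨p, hp, hlim⟩ := exists_tendsto_isFixedPt_of_tendsto_sub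
    (u := fun k => x (k * m + s)) (hlip m) hz (hcycle_succ hx) hreg
  refine ⟨p, hp, fun t => ?_⟩
  simpa only [hcycle hx, comp_def] using ((hlip t).continuous.tendsto p).comp hlim

/-- Indices are `0`-based: `C i` is `C_{i+1}`, and `x (k * m + i + 1) ∈ C i`. -/
theorem stmt11_general {n m : ℕ} [NeZero m]
    (C : Fin m → Set (EuclideanSpace ℝ (Fin n)))
    (hcl : ∀ i, IsClosed (C i)) (hcv : ∀ i, Convex ℝ (C i))
    (P : Fin m → EuclideanSpace ℝ (Fin n) → EuclideanSpace ℝ (Fin n))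
    (hP : ∀ i, IsProjOn (P i) (C i))
    (hbdd : ∃ y : ℕ → EuclideanSpace ℝ (Fin n),
      (∀ k : ℕ, y (k + 1) =
        P ⟨k % m, Nat.mod_lt k (Nat.pos_of_ne_zero (NeZero.ne m))⟩ (y k)) ∧
      Bornology.IsBounded (Set.range fun k : ℕ => y (k * m + 1))) :
    ∀ x : ℕ → EuclideanSpace ℝ (Fin n),
      (∀ k : ℕ, x (k + 1) =
        P ⟨k % m, Nat.mod_lt k (Nat.pos_of_ne_zero (NeZero.ne m))⟩ (x k)) →
      ∃ xs : Fin m → EuclideanSpace ℝ (Fin n),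
        (∀ i, xs i ∈ C i) ∧
        (∀ i : Fin m, P (i + 1) (xs i) = xs (i + 1)) ∧
        (∀ i : Fin m,
          Tendsto (fun k : ℕ => x (k * m + (i : ℕ) + 2) - x (k * m + (i : ℕ) + 1)) atTop
            (nhds (xs (i + 1) - xs i))) ∧
        (∀ i : Fin m,
          Tendsto (fun k : ℕ => x (k * m + (i : ℕ) + 1)) atTop (nhds (xs i))) := by
  intro x hx
  obtain ⟨y, hy, hyb⟩ := hbdd
  set F : ℕ → EuclideanSpace ℝ (Fin n) → EuclideanSpace ℝ (Fin n) :=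
    fun t => P ⟨t % m, Nat.mod_lt t (Nat.pos_of_ne_zero (NeZero.ne m))⟩
  have hper : Periodic F m := fun t => by simp only [F, Nat.add_mod_right]
  obtain ⟨p, hp, hlim⟩ := exists_isFixedPt_evolve_tendsto (NeZero.pos m)
    (fun t => (hP _).firmlyNonexpansive (hcv _)) hper hy hyb hx
  set xs : Fin m → EuclideanSpace ℝ (Fin n) := fun i => evolve F 1 i p
  have hxs_succ : ∀ i : Fin m, xs (i + 1) = evolve F 1 (i + 1) p := fun i => by
    simp only [xs, Fin.val_add, Fin.val_one', Nat.add_mod_mod,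
      (periodic_evolve hper hp).map_mod_nat]
  have hconv : ∀ i : Fin m, Tendsto (fun k => x (k * m + i + 1)) atTop (𝓝 (xs i)) := fun i =>
    (hlim i).congr fun k => congrArg x (by ring)
  refine ⟨xs, fun i => ?_, fun i => ?_, fun i => ?_, hconv⟩
  · refine (hcl i).mem_of_tendsto (hconv i) (Eventually.of_forall fun k => ?_)
    rw [hx]
    convert (hP _ _).1
    simp [Nat.mod_eq_of_lt i.isLt]
  · rw [hxs_succ, evolve_succ]
    congr
    ext
    simp [Fin.val_add, add_comm]
  · rw [hxs_succ]
    exact ((hlim (i + 1)).sub (hconv i)).congr fun k => by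
      rw [show k * m + 1 + (i + 1) = k * m + i + 2 by ring]

/-- Censor–Tom: for cyclic projections onto nonempty closed convex subsets of Euclidean
space, if for at least one starting point the cyclic subsequence `(x^{km+1})_k` is
bounded, then for every generated sequence there is a cycle `(x^{*,i})` such that the
consecutive differences and the cyclic subsequences converge as stated.
(Indices are `0`-based: `C i` is `C_{i+1}`, and `x (k*m + i + 1) ∈ C i`.) -/
theorem stmt11 {n m : ℕ} [NeZero m]
    (C : Fin m → Set (EuclideanSpace ℝ (Fin n)))
    (hne : ∀ i, (C i).Nonempty) (hcl : ∀ i, IsClosed (C i)) (hcv : ∀ i, Convex ℝ (C i))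
    (P : Fin m → EuclideanSpace ℝ (Fin n) → EuclideanSpace ℝ (Fin n))
    (hP : ∀ i, IsProjOn (P i) (C i))
    (hbdd : ∃ y : ℕ → EuclideanSpace ℝ (Fin n),
      (∀ k : ℕ, y (k + 1) =
        P ⟨k % m, Nat.mod_lt k (Nat.pos_of_ne_zero (NeZero.ne m))⟩ (y k)) ∧
      Bornology.IsBounded (Set.range fun k : ℕ => y (k * m + 1))) :
    ∀ x : ℕ → EuclideanSpace ℝ (Fin n),
      (∀ k : ℕ, x (k + 1) =
        P ⟨k % m, Nat.mod_lt k (Nat.pos_of_ne_zero (NeZero.ne m))⟩ (x k)) →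
      ∃ xs : Fin m → EuclideanSpace ℝ (Fin n),
        (∀ i, xs i ∈ C i) ∧
        (∀ i : Fin m, P (i + 1) (xs i) = xs (i + 1)) ∧
        (∀ i : Fin m,
          Tendsto (fun k : ℕ => x (k * m + (i : ℕ) + 2) - x (k * m + (i : ℕ) + 1)) atTop
            (nhds (xs (i + 1) - xs i))) ∧
        (∀ i : Fin m,
          Tendsto (fun k : ℕ => x (k * m + (i : ℕ) + 1)) atTop (nhds (xs i))) :=
  stmt11_general C hcl hcv P hP hbdd
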